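/- arXiv:1609.06942 — 2 statements merged into one kernel-verified Lean document; each statement's English description precedes it below -/
import Mathlib

section
/- Let ω be a random vector in ℝ^d with distribution p and b uniformly distributed on [0, 2π] independent of ω. Then for all x, y ∈ ℝ^d, E[2·cos(⟨ω,x⟩+b)·cos(⟨ω,y⟩+b)] = E[cos(⟨ω, x−y⟩)], i.e. the random Fourier feature product is an unbiased estimator of the real part of the characteristic function of p evaluated at x−y. -/
open MeasureTheory ProbabilityTheory
open scoped RealInnerProductSpace

/-!
By the product-to-sum formula, `2 cos(⟪ω,x⟫ + b) cos(⟪ω,y⟫ + b)` is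
`cos ⟪ω, x - y⟫ + cos(⟪ω, x + y⟫ + 2b)`. By independence and Fubini, the expectation of the
second term is an average over `ω` of the mean of `cos(t + 2b)` over a uniform `b ∈ [0, 2π]`,
which vanishes because `b ↦ 2b` runs through two full periods of the cosine.
-/

theorem Real.two_mul_cos_add_mul_cos_add (a c b : ℝ) :
    2 * Real.cos (a + b) * Real.cos (c + b) = Real.cos (a - c) + Real.cos (a + c + 2 * b) := by
  rw [Real.cos_add_cos, ← Real.cos_neg ((a - c - _) / 2)]
  congr 3 <;> ring

theorem integral_cos_add_int_mul_zero_two_pi (t : ℝ) {n : ℤ} (hn : n ≠ 0) :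
    ∫ b in (0)..(2 * Real.pi), Real.cos (t + n * b) = 0 := by
  rw [intervalIntegral.integral_comp_add_mul _ (Int.cast_ne_zero.mpr hn), integral_cos,
    mul_zero, add_zero, Real.sin_add_int_mul_two_pi, sub_self, smul_zero]

theorem integral_cos_add_two_mul_uniform_Icc (t : ℝ) :
    ∫ b, Real.cos (t + 2 * b)
      ∂((ENNReal.ofReal (2 * Real.pi))⁻¹ • volume.restrict (Set.Icc 0 (2 * Real.pi))) = 0 := by
  rw [integral_smul_measure, integral_Icc_eq_integral_Ioc,
    ← intervalIntegral.integral_of_le Real.two_pi_pos.le]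
  have h := integral_cos_add_int_mul_zero_two_pi t (n := 2) two_ne_zero
  push_cast at h
  rw [h, smul_zero]

section Independent

variable {Ω α β E : Type*} [MeasurableSpace Ω] [MeasurableSpace α] [MeasurableSpace β]
  [NormedAddCommGroup E] [NormedSpace ℝ E] {μ : Measure Ω} [IsFiniteMeasure μ]
  {X : Ω → α} {Y : Ω → β}

theorem integrable_cos_comp {f : Ω → ℝ} (hf : AEStronglyMeasurable f μ) :
    Integrable (fun ω => Real.cos (f ω)) μ :=
  .of_bound (Real.continuous_cos.comp_aestronglyMeasurable hf) 1
    (.of_forall fun ω => by simpa using Real.abs_cos_le_one (f ω))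

theorem ProbabilityTheory.IndepFun.integral_comp_eq_integral_integral (hXY : IndepFun X Y μ)
    (hX : AEMeasurable X μ) (hY : AEMeasurable Y μ) {f : α × β → E}
    (hf : Integrable f ((μ.map X).prod (μ.map Y))) :
    ∫ ω, f (X ω, Y ω) ∂μ = ∫ x, ∫ y, f (x, y) ∂(μ.map Y) ∂(μ.map X) := by
  have hmap := hXY.map_prod_eq_prod_map_map hX hY
  rw [← integral_prod f hf, ← hmap, integral_map (hX.prodMk hY) (hmap ▸ hf.aestronglyMeasurable)]

theorem integral_cos_add_two_mul_eq_zero_of_indepFun_uniform {B : Ω → ℝ} (hXB : IndepFun X B μ)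
    (hX : AEMeasurable X μ) (hB : AEMeasurable B μ)
    (hBlaw : μ.map B
      = (ENNReal.ofReal (2 * Real.pi))⁻¹ • volume.restrict (Set.Icc 0 (2 * Real.pi)))
    {g : α → ℝ} (hg : Measurable g) :
    ∫ ω, Real.cos (g (X ω) + 2 * B ω) ∂μ = 0 := by
  have hint : Integrable (fun q : α × ℝ => Real.cos (g q.1 + 2 * q.2))
      ((μ.map X).prod (μ.map B)) :=
    integrable_cos_comp (by fun_prop)
  rw [hXB.integral_comp_eq_integral_integral hX hB hint, hBlaw]
  simp only [integral_cos_add_two_mul_uniform_Icc, integral_zero]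

end Independent

theorem integral_two_cos_mul_cos_eq_general
    {d : ℕ} {Ω : Type*} [MeasurableSpace Ω] (μ : Measure Ω) [IsProbabilityMeasure μ]
    (W : Ω → EuclideanSpace ℝ (Fin d)) (B : Ω → ℝ)
    (hW : Measurable W) (hB : Measurable B)
    (hBlaw : μ.map B
      = (ENNReal.ofReal (2 * Real.pi))⁻¹ • volume.restrict (Set.Icc 0 (2 * Real.pi)))
    (hind : IndepFun W B μ)
    (x y : EuclideanSpace ℝ (Fin d)) :
    (∫ ω, 2 * Real.cos (⟪W ω, x⟫ + B ω) * Real.cos (⟪W ω, y⟫ + B ω) ∂μ)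
      = ∫ ω, Real.cos ⟪W ω, x - y⟫ ∂μ := by
  simp_rw [Real.two_mul_cos_add_mul_cos_add, ← inner_sub_right]
  rw [integral_add (integrable_cos_comp (by fun_prop)) (integrable_cos_comp (by fun_prop)),
    integral_cos_add_two_mul_eq_zero_of_indepFun_uniform (g := fun w => ⟪w, x⟫ + ⟪w, y⟫)
      hind hW.aemeasurable hB.aemeasurable hBlaw (by fun_prop), add_zero]

/-- If `ω ~ p` and `b ~ Uniform[0, 2π]` are independent, then for all `x, y`,
`E[2·cos(⟨ω,x⟩+b)·cos(⟨ω,y⟩+b)] = E[cos(⟨ω, x−y⟩)]`: the random Fourier feature product is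
an unbiased estimator of the real part of the characteristic function of `p` at `x − y`. -/
theorem integral_two_cos_mul_cos_eq
    {d : ℕ} {Ω : Type*} [MeasurableSpace Ω] (μ : Measure Ω) [IsProbabilityMeasure μ]
    (p : Measure (EuclideanSpace ℝ (Fin d))) [IsProbabilityMeasure p]
    (W : Ω → EuclideanSpace ℝ (Fin d)) (B : Ω → ℝ)
    (hW : Measurable W) (hB : Measurable B)
    (hWlaw : μ.map W = p)
    (hBlaw : μ.map B
      = (ENNReal.ofReal (2 * Real.pi))⁻¹ • volume.restrict (Set.Icc 0 (2 * Real.pi)))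
    (hind : IndepFun W B μ)
    (x y : EuclideanSpace ℝ (Fin d)) :
    (∫ ω, 2 * Real.cos (⟪W ω, x⟫ + B ω) * Real.cos (⟪W ω, y⟫ + B ω) ∂μ)
      = ∫ ω, Real.cos ⟪W ω, x - y⟫ ∂μ :=
  integral_two_cos_mul_cos_eq_general μ W B hW hB hBlaw hind x y
end

section
/- The Amari distance d(V, W) equals 0 if and only if VW^{-1} = DP for some invertible diagonal matrix D and permutation matrix P, i.e. each row and each column of A = VW^{-1} has exactly one nonzero entry. -/
/-! For a nonzero vector `x`, `‖x‖₁ / ‖x‖∞ ≥ 1`, with equality iff `x` has exactly one nonzero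
entry. The rows and columns of the invertible matrix `A = V·W⁻¹` are nonzero, so `d(V, W)` is a
positive multiple of a sum of such nonnegative defects and vanishes iff every row and every column
of `A` has exactly one nonzero entry. The positions of these entries form a permutation `σ`, and
then `A = diag(A i (σ i)) · P_σ`. -/

open Matrix

/-- The Amari distance between invertible matrices `V` and `W`, computed from
`A = V·W⁻¹`. -/
noncomputable def amariDist {n : ℕ} (V W : Matrix (Fin n) (Fin n) ℝ) : ℝ :=
  let A := V * W⁻¹
  (1 / (2 * n)) * ∑ i, ((∑ j, |A i j|) / (⨆ j, |A i j|) - 1)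
    + (1 / (2 * n)) * ∑ j, ((∑ i, |A i j|) / (⨆ i, |A i j|) - 1)

section SupNorm

variable {ι : Type*} [Fintype ι] {f : ι → ℝ}

theorem exists_abs_eq_iSup_abs_pos (hf : f ≠ 0) : ∃ k, |f k| = ⨆ j, |f j| ∧ 0 < |f k| := by
  obtain ⟨j₁, hj₁⟩ := Function.ne_iff.mp hf
  have : Nonempty ι := ⟨j₁⟩
  obtain ⟨k, hk⟩ := exists_eq_ciSup_of_finite (f := fun j => |f j|)
  refine ⟨k, hk, (abs_pos.mpr hj₁).trans_le ?_⟩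
  rw [hk]
  exact le_ciSup (Finite.bddAbove_range fun j => |f j|) j₁

theorem one_le_sum_abs_div_iSup_abs (hf : f ≠ 0) : 1 ≤ (∑ j, |f j|) / ⨆ j, |f j| := by
  obtain ⟨k, hk, hpos⟩ := exists_abs_eq_iSup_abs_pos hf
  rw [← hk, one_le_div hpos]
  exact Finset.single_le_sum (fun j _ => abs_nonneg (f j)) (Finset.mem_univ k)

theorem sum_abs_div_iSup_abs_eq_one_iff (hf : f ≠ 0) :
    (∑ j, |f j|) / (⨆ j, |f j|) = 1 ↔ ∃! j, f j ≠ 0 := by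
  classical
  obtain ⟨k, hk, hpos⟩ := exists_abs_eq_iSup_abs_pos hf
  rw [← hk, div_eq_one_iff_eq hpos.ne', ← Finset.add_sum_erase _ _ (Finset.mem_univ k),
    add_eq_left, Finset.sum_eq_zero_iff_of_nonneg (fun j _ => abs_nonneg (f j))]
  constructor
  · intro hrest
    refine ⟨k, abs_pos.mp hpos, fun j hj => ?_⟩
    by_contra hjk
    exact hj (abs_eq_zero.mp (hrest j (Finset.mem_erase.mpr ⟨hjk, Finset.mem_univ j⟩)))
  · rintro ⟨_, -, huniq⟩ j hj
    rw [abs_eq_zero]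
    by_contra hfj
    exact (Finset.mem_erase.mp hj).1 ((huniq j hfj).trans (huniq k (abs_pos.mp hpos)).symm)

end SupNorm

namespace Matrix

variable {ι K : Type*}

def IsMonomial [Zero K] (A : Matrix ι ι K) : Prop :=
  (∀ i, ∃! j, A i j ≠ 0) ∧ ∀ j, ∃! i, A i j ≠ 0

theorem isMonomial_iff_exists_perm [Finite ι] [Zero K] {A : Matrix ι ι K} :
    A.IsMonomial ↔ ∃ σ : Equiv.Perm ι, ∀ i j, A i j ≠ 0 ↔ σ i = j := by
  constructor
  · rintro ⟨hrow, hcol⟩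
    choose g hg hg_uniq using hrow
    have hinj : g.Injective := fun i₁ i₂ h =>
      (hcol (g i₁)).unique (hg i₁) (h ▸ hg i₂)
    refine ⟨Equiv.ofBijective g (Finite.injective_iff_bijective.mp hinj), fun i j => ?_⟩
    exact ⟨fun h => (hg_uniq i j h).symm, fun h => h ▸ hg i⟩
  · rintro ⟨σ, hσ⟩
    refine ⟨fun i => ⟨σ i, (hσ i _).mpr rfl, fun j h => ((hσ i j).mp h).symm⟩,
      fun j => ⟨σ.symm j, (hσ _ j).mpr (σ.apply_symm_apply j), fun i h => ?_⟩⟩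
    exact σ.eq_symm_apply.mpr ((hσ i j).mp h)

theorem diagonal_mul_permMatrix_apply [Fintype ι] [DecidableEq ι] [Semiring K] (d : ι → K)
    (σ : Equiv.Perm ι) (i j : ι) :
    (diagonal d * σ.permMatrix K) i j = if σ i = j then d i else 0 := by
  simp [diagonal_mul, eq_comm]

theorem exists_perm_iff_exists_diagonal_mul_permMatrix [Fintype ι] [DecidableEq ι] [Field K]
    {A : Matrix ι ι K} :
    (∃ σ : Equiv.Perm ι, ∀ i j, A i j ≠ 0 ↔ σ i = j) ↔
      ∃ (D : Matrix ι ι K) (σ : Equiv.Perm ι), D.IsDiag ∧ IsUnit D.det ∧ A = D * σ.permMatrix K := by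
  constructor
  · rintro ⟨σ, hσ⟩
    refine ⟨diagonal fun i => A i (σ i), σ, isDiag_diagonal _, ?_, ?_⟩
    · rw [det_diagonal, isUnit_iff_ne_zero, Finset.prod_ne_zero_iff]
      exact fun i _ => (hσ i _).mpr rfl
    · ext i j
      rw [diagonal_mul_permMatrix_apply]
      split_ifs with h
      · rw [h]
      · exact not_not.mp (mt (hσ i j).mp h)
  · rintro ⟨D, σ, hD, hDet, rfl⟩
    rw [← hD.diagonal_diag, det_diagonal, isUnit_iff_ne_zero, Finset.prod_ne_zero_iff] at hDet
    refine ⟨σ, fun i j => ?_⟩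
    rw [← hD.diagonal_diag, diagonal_mul_permMatrix_apply]
    split_ifs with h
    · exact iff_of_true (hDet i (Finset.mem_univ i)) h
    · exact iff_of_false (not_not.mpr rfl) h

end Matrix

theorem amariDist_eq_zero_iff_isMonomial {n : ℕ} (hn : 0 < n) {V W : Matrix (Fin n) (Fin n) ℝ}
    (hA : IsUnit (V * W⁻¹).det) : amariDist V W = 0 ↔ (V * W⁻¹).IsMonomial := by
  set A := V * W⁻¹
  have hrow : ∀ i, A i ≠ 0 := fun i h => hA.ne_zero (det_eq_zero_of_row_eq_zero i (congrFun h))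
  have hcol : ∀ j, Aᵀ j ≠ 0 := fun j h =>
    hA.ne_zero (det_eq_zero_of_column_eq_zero j (congrFun h))
  have hrow_nonneg : ∀ i ∈ Finset.univ, 0 ≤ (∑ j, |A i j|) / (⨆ j, |A i j|) - 1 :=
    fun i _ => sub_nonneg.mpr (one_le_sum_abs_div_iSup_abs (hrow i))
  have hcol_nonneg : ∀ j ∈ Finset.univ, 0 ≤ (∑ i, |Aᵀ j i|) / (⨆ i, |Aᵀ j i|) - 1 :=
    fun j _ => sub_nonneg.mpr (one_le_sum_abs_div_iSup_abs (hcol j))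
  have hc : (0 : ℝ) < 1 / (2 * n) := by positivity
  change 1 / (2 * n) * ∑ i, ((∑ j, |A i j|) / (⨆ j, |A i j|) - 1)
      + 1 / (2 * n) * ∑ j, ((∑ i, |Aᵀ j i|) / (⨆ i, |Aᵀ j i|) - 1) = 0 ↔ _
  rw [add_eq_zero_iff_of_nonneg (mul_nonneg hc.le (Finset.sum_nonneg hrow_nonneg))
      (mul_nonneg hc.le (Finset.sum_nonneg hcol_nonneg)),
    mul_eq_zero, mul_eq_zero, or_iff_right hc.ne', or_iff_right hc.ne',
    Finset.sum_eq_zero_iff_of_nonneg hrow_nonneg, Finset.sum_eq_zero_iff_of_nonneg hcol_nonneg]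
  simp only [Finset.mem_univ, forall_const, sub_eq_zero, sum_abs_div_iSup_abs_eq_one_iff (hrow _),
    sum_abs_div_iSup_abs_eq_one_iff (hcol _)]
  rfl

/-- The Amari distance `d(V, W)` equals `0` if and only if `V·W⁻¹ = D·P` for some invertible
diagonal matrix `D` and permutation matrix `P` (equivalently, each row and column of
`A = V·W⁻¹` has exactly one nonzero entry). -/
theorem amariDist_eq_zero_iff {n : ℕ} (hn : 0 < n) (V W : Matrix (Fin n) (Fin n) ℝ)
    (hV : IsUnit V.det) (hW : IsUnit W.det) :
    amariDist V W = 0 ↔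
      ∃ (D : Matrix (Fin n) (Fin n) ℝ) (σ : Equiv.Perm (Fin n)),
        D.IsDiag ∧ IsUnit D.det ∧ V * W⁻¹ = D * σ.permMatrix ℝ := by
  have hA : IsUnit (V * W⁻¹).det := by
    rw [det_mul]
    exact hV.mul (isUnit_nonsing_inv_det W hW)
  rw [amariDist_eq_zero_iff_isMonomial hn hA, isMonomial_iff_exists_perm,
    exists_perm_iff_exists_diagonal_mul_permMatrix]
end
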